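/- arXiv:2411.03092 — 2 statements merged into one kernel-verified Lean document; each statement's English description precedes it below -/
import Mathlib

section
/- The radical of Ĩ, namely {λ ∈ L̃ : Ĩ(λ, μ) = 0 for all μ ∈ L̃}, equals ℤδ, the subgroup generated by δ = α_{𝟙*} − α_𝟙. -/
namespace AffineGRS

noncomputable section

/-- The vertex set `Ṽ_A` of the affine Coxeter--Dynkin diagram attached to a
triple `A = (a 0, a 1, a 2)`: it consists of `𝟙*`, `𝟙` and the branch vertices
`(i, j)` for `i ∈ {1,2,3}` and `1 ≤ j ≤ a i − 1` (coded by `Fin (a i - 1)`). -/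
inductive Vt (a : Fin 3 → ℕ) : Type where
  | star : Vt a
  | one  : Vt a
  | br   : (i : Fin 3) → Fin (a i - 1) → Vt a

def vtEquiv (a : Fin 3 → ℕ) : Vt a ≃ (Unit ⊕ Unit ⊕ (Σ i : Fin 3, Fin (a i - 1))) where
  toFun v :=
    match v with
    | Vt.star => Sum.inl ()
    | Vt.one => Sum.inr (Sum.inl ())
    | Vt.br i j => Sum.inr (Sum.inr ⟨i, j⟩)
  invFun x :=
    match x with
    | Sum.inl _ => Vt.star
    | Sum.inr (Sum.inl _) => Vt.one
    | Sum.inr (Sum.inr ⟨i, j⟩) => Vt.br i j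
  left_inv v := by cases v <;> rfl
  right_inv x := by rcases x with _ | (_ | ⟨i, j⟩) <;> rfl

instance (a : Fin 3 → ℕ) : DecidableEq (Vt a) := (vtEquiv a).decidableEq
instance (a : Fin 3 → ℕ) : Fintype (Vt a) := Fintype.ofEquiv _ (vtEquiv a).symm

/-- The entries `Ĩ(α_u, α_v)` of the Cartan form on the basis `{α_v : v ∈ Ṽ_A}`. -/
def cartan (a : Fin 3 → ℕ) : Vt a → Vt a → ℤ
  | Vt.star, Vt.star => 2
  | Vt.one, Vt.one => 2
  | Vt.star, Vt.one => 2
  | Vt.one, Vt.star => 2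
  | Vt.star, Vt.br _ j => if (j : ℕ) = 0 then -1 else 0
  | Vt.br _ j, Vt.star => if (j : ℕ) = 0 then -1 else 0
  | Vt.one, Vt.br _ j => if (j : ℕ) = 0 then -1 else 0
  | Vt.br _ j, Vt.one => if (j : ℕ) = 0 then -1 else 0
  | Vt.br i j, Vt.br i' j' =>
      if i = i' ∧ ((j : ℕ) = (j' : ℕ) + 1 ∨ (j' : ℕ) = (j : ℕ) + 1) then -1
      else if i = i' ∧ (j : ℕ) = (j' : ℕ) then 2 else 0

/-- The root lattice `L̃`: the free `ℤ`-module with basis `{α_v : v ∈ Ṽ_A}`. -/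
abbrev Lt (a : Fin 3 → ℕ) : Type := Vt a →₀ ℤ

/-- The basis vector `α_v ∈ L̃`. -/
def gen (a : Fin 3 → ℕ) (v : Vt a) : Lt a := Finsupp.single v 1

/-- The symmetric bilinear form `Ĩ` on `L̃`. -/
def Iform (a : Fin 3 → ℕ) (x y : Lt a) : ℤ :=
  x.sum fun u xu => y.sum fun v yv => xu * yv * cartan a u v

/-- `δ := α_{𝟙*} − α_𝟙`. -/
def delta (a : Fin 3 → ℕ) : Lt a := gen a Vt.star - gen a Vt.one

/-- The reflection `r_α(x) = x − Ĩ(α, x) α` (for `α` with `Ĩ(α,α) = 2`). -/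
def reflect (a : Fin 3 → ℕ) (α : Lt a) (x : Lt a) : Lt a := x - Iform a α x • α

/-- The composite `r_{α_{(i,1)}} ∘ r_{α_{(i,2)}} ∘ ⋯ ∘ r_{α_{(i, a i − 1)}}`. -/
def branchComp (a : Fin 3 → ℕ) (i : Fin 3) : Lt a → Lt a :=
  (List.finRange (a i - 1)).foldr (fun j f => reflect a (gen a (Vt.br i j)) ∘ f) id

/-- The Coxeter transformation
`c̃_A := r_{α_{𝟙*}} ∘ r_{α_𝟙} ∘ r_{α_{(1,1)}} ∘ ⋯ ∘ r_{α_{(3, a₃ − 1)}}`. -/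
def coxeter (a : Fin 3 → ℕ) : Lt a → Lt a :=
  reflect a (gen a Vt.star) ∘ reflect a (gen a Vt.one) ∘
    branchComp a 0 ∘ branchComp a 1 ∘ branchComp a 2

/-- A `ℤ`-bilinear form `χ` on `L̃` is an Euler form for `(L̃, Ĩ, c̃_A)` if
`Ĩ = χ + χᵀ` and `χ(λ, λ') = −χ(λ', c̃_A(λ))` (Serre duality). -/
def IsEulerForm (a : Fin 3 → ℕ) (χ : Lt a →ₗ[ℤ] Lt a →ₗ[ℤ] ℤ) : Prop :=
  (∀ x y : Lt a, Iform a x y = χ x y + χ y x) ∧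
  (∀ x y : Lt a, χ x y = - χ y (coxeter a x))

/-- The twist automorphism `t_δ(λ) = λ − χ(δ, λ) δ` (as a function). -/
def twist (a : Fin 3 → ℕ) (χ : Lt a →ₗ[ℤ] Lt a →ₗ[ℤ] ℤ) (x : Lt a) : Lt a :=
  x - χ (delta a) x • delta a

/-- The inverse of the twist automorphism, `λ ↦ λ + χ(δ, λ) δ`. -/
def twistInv (a : Fin 3 → ℕ) (χ : Lt a →ₗ[ℤ] Lt a →ₗ[ℤ] ℤ) (x : Lt a) : Lt a :=
  x + χ (delta a) x • delta a

/-- The simple reflections `r_{α_v}`, viewed as the set of `ℤ`-linear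
automorphisms of `L̃` whose underlying function is `reflect a (gen a v)`. -/
def weylGens (a : Fin 3 → ℕ) : Set (Lt a ≃ₗ[ℤ] Lt a) :=
  { g | ∃ v : Vt a, ∀ x : Lt a, g x = reflect a (gen a v) x }

/-- The affine Weyl group `W̃_A`, generated by the simple reflections. -/
def weyl (a : Fin 3 → ℕ) : Subgroup (Lt a ≃ₗ[ℤ] Lt a) := Subgroup.closure (weylGens a)

/-- The set of real roots `Δ̃_re = {w(α_v) : w ∈ W̃_A, v ∈ Ṽ_A}`. -/
def realRoots (a : Fin 3 → ℕ) : Set (Lt a) :=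
  { x | ∃ w ∈ weyl a, ∃ v : Vt a, x = w (gen a v) }

/-- The extended affine Weyl group `W̃_A^ext`, generated by `W̃_A` and `t_δ`. -/
def extWeyl (a : Fin 3 → ℕ) (χ : Lt a →ₗ[ℤ] Lt a →ₗ[ℤ] ℤ) :
    Subgroup (Lt a ≃ₗ[ℤ] Lt a) :=
  Subgroup.closure (weylGens a ∪ { g | ∀ x : Lt a, g x = twist a χ x })

/-! The rows of `Ĩ` indexed by `𝟙*` and `𝟙` coincide, so `δ` lies in the radical. Conversely,
let `λ` be in the radical and merge `𝟙*`, `𝟙` into a hub carrying `s = λ_{𝟙*} + λ_𝟙`. Along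
the `i`-th arm the equations `Ĩ(λ, α_{(i,j)}) = 0` say the coefficients have vanishing second
differences, so they interpolate linearly between `s` at the hub and `0` one step past the
end of the arm; with `c_i` the first coefficient on the arm this gives `a_i c_i = (a_i - 1) s`.
The equation at `𝟙*` reads `2 s = c_1 + c_2 + c_3`, and eliminating the `c_i` leaves
`s (a₂a₃ + a₁a₃ + a₁a₂ - a₁a₂a₃) = 0`, whose second factor is positive exactly when
`1/a₁ + 1/a₂ + 1/a₃ > 1`. Hence `s = 0`, every arm vanishes, and `λ = λ_{𝟙*} δ`. -/

lemma eq_add_mul_sub_of_two_mul_eq {R : Type*} [CommRing R] {f : ℕ → R} {n : ℕ}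
    (hf : ∀ j < n, 2 * f (j + 1) = f j + f (j + 2)) :
    ∀ j ≤ n + 1, f j = f 0 + j * (f 1 - f 0) := by
  suffices h : ∀ j ≤ n, f j = f 0 + j * (f 1 - f 0) ∧ f (j + 1) = f 0 + (j + 1) * (f 1 - f 0) by
    rintro (_ | j) hj
    · simp
    · simpa using (h j (by omega)).2
  intro j
  induction j with
  | zero => intro; constructor <;> ring
  | succ j ih =>
    intro hj
    obtain ⟨h0, h1⟩ := ih (by omega)
    refine ⟨by simpa using h1, ?_⟩
    push_cast
    linear_combination -hf j (by omega) - h0 + 2 * h1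

lemma eq_zero_of_two_mul_eq_sum {R : Type*} [CommRing R] [NoZeroDivisors R] {s : R}
    {c m : Fin 3 → R} (hs : 2 * s = ∑ i, c i) (hc : ∀ i, m i * c i = (m i - 1) * s)
    (hm : m 0 * m 1 * m 2 ≠ m 1 * m 2 + m 0 * m 2 + m 0 * m 1) : s = 0 := by
  have h : s * (m 1 * m 2 + m 0 * m 2 + m 0 * m 1 - m 0 * m 1 * m 2) = 0 := by
    rw [Fin.sum_univ_three] at hs
    linear_combination m 0 * m 1 * m 2 * hs + m 1 * m 2 * hc 0 + m 0 * m 2 * hc 1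
      + m 0 * m 1 * hc 2
  exact (mul_eq_zero.mp h).resolve_right (sub_ne_zero.mpr hm.symm)

lemma mul_lt_of_one_lt_sum_inv (m : Fin 3 → ℕ) (hm : ∀ i, 0 < m i)
    (h : 1 < ∑ i, (m i : ℚ)⁻¹) : m 0 * m 1 * m 2 < m 1 * m 2 + m 0 * m 2 + m 0 * m 1 := by
  have := hm 0; have := hm 1; have := hm 2
  rw [Fin.sum_univ_three] at h
  field_simp at h
  exact_mod_cast (by linarith : (m 0 * m 1 * m 2 : ℚ) < m 1 * m 2 + m 0 * m 2 + m 0 * m 1)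

lemma inv_natCast_le_inv_natCast_sub_one_add_one (n : ℕ) :
    (n : ℚ)⁻¹ ≤ ((n - 1 + 1 : ℕ) : ℚ)⁻¹ := by
  rcases n with _ | n <;> simp

variable {a : Fin 3 → ℕ}

lemma sum_vt {M : Type*} [AddCommMonoid M] (g : Vt a → M) :
    ∑ u, g u = g .star + g .one + ∑ i : Fin 3, ∑ j : Fin (a i - 1), g (.br i j) := by
  rw [← (vtEquiv a).symm.sum_comp g, Fintype.sum_sum_type, Fintype.sum_sum_type]
  simp [vtEquiv, Finset.sum_sigma', add_assoc]

lemma Iform_gen_right_eq_sum (x : Lt a) (v : Vt a) :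
    Iform a x (gen a v) = x.sum fun u xu => xu * cartan a u v := by
  simp [Iform, gen]

lemma Iform_gen_right (x : Lt a) (v : Vt a) :
    Iform a x (gen a v) = ∑ u, x u * cartan a u v := by
  rw [Iform_gen_right_eq_sum, Finsupp.sum_fintype _ _ (by simp)]

lemma Iform_eq_sum_mul_Iform_gen (x y : Lt a) :
    Iform a x y = y.sum fun v yv => yv * Iform a x (gen a v) := by
  rw [Iform]
  simp only [Iform_gen_right_eq_sum, Finsupp.mul_sum]
  rw [Finsupp.sum_comm]
  exact Finsupp.sum_congr fun v _ => Finsupp.sum_congr fun u _ => by ring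

lemma mem_radical_iff (x : Lt a) :
    (∀ y, Iform a x y = 0) ↔ ∀ v, Iform a x (gen a v) = 0 :=
  ⟨fun hx v => hx _, fun hx y => by rw [Iform_eq_sum_mul_Iform_gen]; simp [hx]⟩

lemma delta_apply_star : delta a .star = 1 := by simp [delta, gen]

lemma delta_apply_one : delta a .one = -1 := by simp [delta, gen]

lemma delta_apply_br (i : Fin 3) (j : Fin (a i - 1)) : delta a (.br i j) = 0 := by
  simp [delta, gen]

lemma cartan_star_left (v : Vt a) : cartan a .star v = cartan a .one v := by
  cases v <;> rfl

lemma Iform_smul_delta_gen (n : ℤ) (v : Vt a) : Iform a (n • delta a) (gen a v) = 0 := by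
  rw [Iform_gen_right, sum_vt]
  simp [delta_apply_star, delta_apply_one, delta_apply_br, cartan_star_left]

/-- `armCoeff i k` reads off the `k`-th vertex of the `i`-th arm: vertex `0` is the hub
`{𝟙*, 𝟙}` (for every arm), vertex `k + 1` is `(i, k)`, and there is nothing past the end of the
arm (`k ≥ a i`). -/
def armCoeff (i : Fin 3) : ℕ → Vt a → ℤ
  | 0, .star => 1
  | 0, .one => 1
  | 0, .br _ _ => 0
  | _ + 1, .star => 0
  | _ + 1, .one => 0
  | k + 1, .br i' j => if i' = i ∧ (j : ℕ) = k then 1 else 0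

def arm (x : Lt a) (i : Fin 3) (k : ℕ) : ℤ := ∑ u, x u * armCoeff i k u

lemma arm_zero (x : Lt a) (i : Fin 3) : arm x i 0 = x .star + x .one := by
  simp [arm, sum_vt, armCoeff]

lemma arm_succ (x : Lt a) (i : Fin 3) (k : ℕ) :
    arm x i (k + 1) = if h : k < a i - 1 then x (.br i ⟨k, h⟩) else 0 := by
  simp only [arm, sum_vt, armCoeff, mul_ite, mul_one, mul_zero, ite_and, add_zero, zero_add]
  rw [Finset.sum_eq_single i (fun i' _ hi => Finset.sum_eq_zero fun _ _ => if_neg hi) (by simp)]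
  simp only [if_true]
  split_ifs with h
  · rw [Finset.sum_eq_single ⟨k, h⟩ (fun j _ hj => if_neg fun hk => hj (Fin.ext hk)) (by simp)]
    simp
  · exact Finset.sum_eq_zero fun j _ => if_neg fun hk : (j : ℕ) = k => h (hk ▸ j.isLt)

lemma cartan_star_right (u : Vt a) :
    cartan a u .star = 2 * armCoeff 0 0 u - ∑ i, armCoeff i 1 u := by
  rcases u with _ | _ | ⟨i', j⟩ <;> simp [cartan, armCoeff]
  split_ifs with h <;> simp [h, Finset.filter_eq]

lemma cartan_br_right (u : Vt a) (i : Fin 3) (j : Fin (a i - 1)) :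
    cartan a u (.br i j) = 2 * armCoeff i (j + 1) u - armCoeff i j u - armCoeff i (j + 2) u := by
  rcases u with _ | _ | ⟨i', j'⟩
  · rcases j with ⟨_ | j, hj⟩ <;> simp [cartan, armCoeff]
  · rcases j with ⟨_ | j, hj⟩ <;> simp [cartan, armCoeff]
  · by_cases hi : i' = i
    · subst hi
      rcases j with ⟨_ | j, hj⟩ <;> simp [cartan, armCoeff] <;> split_ifs <;> omega
    · rcases j with ⟨_ | j, hj⟩ <;> simp [cartan, armCoeff, hi]

lemma Iform_gen_star (x : Lt a) :
    Iform a x (gen a .star) = 2 * (x .star + x .one) - ∑ i, arm x i 1 := by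
  rw [← arm_zero x 0]
  simp only [Iform_gen_right, cartan_star_right, arm, mul_sub, Finset.mul_sum,
    Finset.sum_sub_distrib, mul_left_comm _ (2 : ℤ)]
  exact congrArg _ Finset.sum_comm

lemma Iform_gen_br (x : Lt a) (i : Fin 3) (j : Fin (a i - 1)) :
    Iform a x (gen a (.br i j)) = 2 * arm x i (j + 1) - arm x i j - arm x i (j + 2) := by
  simp only [Iform_gen_right, cartan_br_right, arm, mul_sub, Finset.mul_sum,
    Finset.sum_sub_distrib, mul_left_comm _ (2 : ℤ)]

lemma arm_succ_val (x : Lt a) (i : Fin 3) (j : Fin (a i - 1)) : arm x i (j + 1) = x (.br i j) := by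
  simp [arm_succ]

lemma arm_length_succ (x : Lt a) (i : Fin 3) : arm x i (a i - 1 + 1) = 0 := by
  simp [arm_succ]

section Radical

variable {x : Lt a} (hx : ∀ v, Iform a x (gen a v) = 0)
include hx

lemma arm_eq_add_mul (i : Fin 3) :
    ∀ k ≤ a i - 1 + 1, arm x i k = arm x i 0 + k * (arm x i 1 - arm x i 0) :=
  eq_add_mul_sub_of_two_mul_eq fun j hj => by
    have := Iform_gen_br x i ⟨j, hj⟩
    rw [hx] at this
    linear_combination -this

lemma arm_length_succ_mul_arm_one (i : Fin 3) :
    (((a i - 1 : ℕ) : ℤ) + 1) * arm x i 1 = ((a i - 1 : ℕ) : ℤ) * arm x i 0 := by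
  have := arm_eq_add_mul hx i _ le_rfl
  rw [arm_length_succ] at this
  push_cast at this
  linear_combination -this

variable (hA : 1 < ∑ i, ((a i - 1 + 1 : ℕ) : ℚ)⁻¹)
include hA

lemma star_add_one_eq_zero : x .star + x .one = 0 := by
  have hs : 2 * (x .star + x .one) = ∑ i, arm x i 1 := by
    have := Iform_gen_star x
    rw [hx] at this
    linear_combination -this
  have hP := mul_lt_of_one_lt_sum_inv (fun i => a i - 1 + 1) (fun _ => Nat.succ_pos _) hA
  refine eq_zero_of_two_mul_eq_sum (m := fun i => ((a i - 1 + 1 : ℕ) : ℤ)) hs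
    (fun i => ?_) (by exact_mod_cast hP.ne)
  push_cast
  rw [add_sub_cancel_right, ← arm_zero x i]
  exact arm_length_succ_mul_arm_one hx i

lemma arm_eq_zero (i : Fin 3) {k : ℕ} (hk : k ≤ a i - 1 + 1) : arm x i k = 0 := by
  have h0 : arm x i 0 = 0 := by rw [arm_zero, star_add_one_eq_zero hx hA]
  have h1 := arm_length_succ_mul_arm_one hx i
  rw [h0, mul_zero] at h1
  have h1 : arm x i 1 = 0 := (mul_eq_zero.mp h1).resolve_left (by positivity)
  rw [arm_eq_add_mul hx i k hk, h0, h1]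
  ring

lemma eq_star_smul_delta : x = x .star • delta a := by
  ext (_ | _ | ⟨i, j⟩)
  · simp [delta_apply_star]
  · simp [delta_apply_one]
    linarith [star_add_one_eq_zero hx hA]
  · rw [← arm_succ_val, arm_eq_zero hx hA i (by omega)]
    simp [delta_apply_br]

end Radical

theorem radical_eq_zdelta_general (a : Fin 3 → ℕ)
    (hA : 1 < (a 0 : ℚ)⁻¹ + (a 1 : ℚ)⁻¹ + (a 2 : ℚ)⁻¹) :
    { x : Lt a | ∀ y : Lt a, Iform a x y = 0 } =
      { x : Lt a | ∃ n : ℤ, x = n • delta a } := by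
  -- `(0 : ℚ)⁻¹ = 0`, and an arm with `a i = 0` is empty just as for `a i = 1`
  have hA' : 1 < ∑ i, ((a i - 1 + 1 : ℕ) : ℚ)⁻¹ := by
    rw [Fin.sum_univ_three]
    linarith [inv_natCast_le_inv_natCast_sub_one_add_one (a 0),
      inv_natCast_le_inv_natCast_sub_one_add_one (a 1),
      inv_natCast_le_inv_natCast_sub_one_add_one (a 2)]
  ext x
  simp only [Set.mem_ofPred_eq, mem_radical_iff]
  constructor
  · exact fun hx => ⟨x .star, eq_star_smul_delta hx hA'⟩
  · rintro ⟨n, rfl⟩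
    exact Iform_smul_delta_gen n

/-- **The radical of `Ĩ` is `ℤδ`**: the set
`{λ ∈ L̃ : Ĩ(λ, μ) = 0 for all μ}` equals the subgroup generated by
`δ = α_{𝟙*} − α_𝟙`. -/
theorem radical_eq_zdelta (a : Fin 3 → ℕ) (ha : ∀ i, 0 < a i)
    (hA : 1 < (a 0 : ℚ)⁻¹ + (a 1 : ℚ)⁻¹ + (a 2 : ℚ)⁻¹) :
    { x : Lt a | ∀ y : Lt a, Iform a x y = 0 } =
      { x : Lt a | ∃ n : ℤ, x = n • delta a } :=
  radical_eq_zdelta_general a hA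

end
end AffineGRS
end

section
/- The twist automorphism preserves the set of real roots: t_δ(Δ̃_re) = Δ̃_re, where Δ̃_re = {w(α_v) : w ∈ W̃_A, v ∈ Ṽ_A}. -/
/-!
The form `Ĩ` has `δ` in its radical, and `W̃_A` acts by isometries fixing `δ`. For a linear form
`c` with `c δ = 0`, the shear `x ↦ x - c x • δ` is therefore an isometry and conjugates each
reflection `r_α` into `r_{α - c α • δ}`; so it maps real roots to real roots as soon as every
`α_v + n • δ` is a real root, and its inverse is the shear by `-c`. The roots `α_v + n • δ` come
from the transvections `x ↦ x + Ĩ(γ, x) • δ`: the `γ` whose transvection lies in `W̃_A` form a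
`W̃_A`-stable lattice containing `α_𝟙` (the transvection is `r_{α_𝟙*} ∘ r_{α_𝟙}`), hence, walking
along each branch, every `α_{(i,j)}`. The twist is the shear by `c = χ δ`, and
`2 χ(δ, δ) = Ĩ(δ, δ) = 0`.
-/

namespace AffineGRS

noncomputable section

section RootSystem

variable {a : Fin 3 → ℕ}

def Iformₗ (a : Fin 3 → ℕ) : Lt a →ₗ[ℤ] Lt a →ₗ[ℤ] ℤ :=
  Finsupp.linearCombination ℤ fun u => Finsupp.linearCombination ℤ (cartan a u)

theorem Iformₗ_apply (x y : Lt a) : Iformₗ a x y = Iform a x y := by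
  simp only [Iformₗ, Iform, Finsupp.linearCombination_apply, LinearMap.finsupp_sum_apply,
    LinearMap.smul_apply, smul_eq_mul, Finsupp.mul_sum]
  exact Finsupp.sum_congr fun _ _ => Finsupp.sum_congr fun _ _ => by ring

@[simp] theorem Iform_add_left (x x' y : Lt a) :
    Iform a (x + x') y = Iform a x y + Iform a x' y := by
  simp [← Iformₗ_apply]

@[simp] theorem Iform_sub_left (x x' y : Lt a) :
    Iform a (x - x') y = Iform a x y - Iform a x' y := by
  simp [← Iformₗ_apply]

@[simp] theorem Iform_smul_left (n : ℤ) (x y : Lt a) : Iform a (n • x) y = n * Iform a x y := by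
  simp [← Iformₗ_apply]

@[simp] theorem Iform_add_right (x y y' : Lt a) :
    Iform a x (y + y') = Iform a x y + Iform a x y' := by
  simp [← Iformₗ_apply]

@[simp] theorem Iform_sub_right (x y y' : Lt a) :
    Iform a x (y - y') = Iform a x y - Iform a x y' := by
  simp [← Iformₗ_apply]

@[simp] theorem Iform_smul_right (n : ℤ) (x y : Lt a) : Iform a x (n • y) = n * Iform a x y := by
  simp [← Iformₗ_apply]

theorem Iform_gen_gen (u v : Vt a) : Iform a (gen a u) (gen a v) = cartan a u v := by
  simp [← Iformₗ_apply, Iformₗ, gen]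

theorem cartan_symm (u v : Vt a) : cartan a u v = cartan a v u := by
  cases u <;> cases v <;> try rfl
  case br.br i j i' j' =>
    simp only [cartan, eq_comm (a := i)]
    split_ifs <;> omega

theorem Iform_symm (x y : Lt a) : Iform a x y = Iform a y x := by
  unfold Iform
  rw [Finsupp.sum_comm]
  exact Finsupp.sum_congr fun u _ => Finsupp.sum_congr fun v _ => by rw [cartan_symm]; ring

theorem cartan_self (v : Vt a) : cartan a v v = 2 := by
  cases v <;> simp [cartan]

theorem Iform_gen_self (v : Vt a) : Iform a (gen a v) (gen a v) = 2 := by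
  rw [Iform_gen_gen, cartan_self]

theorem Iform_delta_right (x : Lt a) : Iform a x (delta a) = 0 := by
  have : (Iformₗ a).flip (delta a) = 0 := Finsupp.lhom_ext fun u n => by
    cases u <;> simp [Iformₗ, delta, gen, cartan]
  simpa [← Iformₗ_apply] using LinearMap.congr_fun this x

theorem Iform_delta_left (x : Lt a) : Iform a (delta a) x = 0 := by
  rw [Iform_symm, Iform_delta_right]

theorem reflect_reflect {α : Lt a} (hα : Iform a α α = 2) (x : Lt a) :
    reflect a α (reflect a α x) = x := by
  simp only [reflect, Iform_sub_right, Iform_smul_right, hα]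
  module

theorem Iform_reflect_reflect {α : Lt a} (hα : Iform a α α = 2) (x y : Lt a) :
    Iform a (reflect a α x) (reflect a α y) = Iform a x y := by
  simp only [reflect, Iform_sub_left, Iform_sub_right, Iform_smul_left, Iform_smul_right, hα,
    Iform_symm x α]
  ring

theorem reflect_delta (α : Lt a) : reflect a α (delta a) = delta a := by
  simp [reflect, Iform_delta_right]

def simpleReflection (v : Vt a) : Lt a ≃ₗ[ℤ] Lt a :=
  Module.reflection (f := Iformₗ a (gen a v)) (x := gen a v) (by
    rw [Iformₗ_apply, Iform_gen_self])

theorem simpleReflection_apply (v : Vt a) (x : Lt a) :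
    simpleReflection v x = reflect a (gen a v) x := by
  rw [simpleReflection, Module.reflection_apply, Iformₗ_apply, reflect]

theorem simpleReflection_mem_weyl (v : Vt a) : simpleReflection v ∈ weyl a :=
  Subgroup.subset_closure ⟨v, simpleReflection_apply v⟩

theorem inv_mem_weylGens {g : Lt a ≃ₗ[ℤ] Lt a} (hg : g ∈ weylGens a) : g⁻¹ ∈ weylGens a := by
  obtain ⟨v, hv⟩ := hg
  refine ⟨v, fun x => (LinearEquiv.symm_apply_eq g).2 ?_⟩
  rw [hv, reflect_reflect (Iform_gen_self v)]

theorem Iform_weyl_apply {w : Lt a ≃ₗ[ℤ] Lt a} (hw : w ∈ weyl a) (x y : Lt a) :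
    Iform a (w x) (w y) = Iform a x y := by
  induction hw using Subgroup.closure_induction generalizing x y with
  | mem g hg =>
    obtain ⟨v, hv⟩ := hg
    rw [hv, hv, Iform_reflect_reflect (Iform_gen_self v)]
  | one => rfl
  | mul g h _ _ ihg ihh => exact (ihg _ _).trans (ihh x y)
  | inv g _ ihg => simpa using (ihg (g.symm x) (g.symm y)).symm

theorem weyl_apply_delta {w : Lt a ≃ₗ[ℤ] Lt a} (hw : w ∈ weyl a) : w (delta a) = delta a := by
  induction hw using Subgroup.closure_induction with
  | mem g hg =>
    obtain ⟨v, hv⟩ := hg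
    rw [hv, reflect_delta]
  | one => rfl
  | mul g h _ _ ihg ihh => exact (congrArg g ihh).trans ihg
  | inv g _ ihg => exact (LinearEquiv.symm_apply_eq g).2 ihg.symm

theorem weyl_apply_reflect {w : Lt a ≃ₗ[ℤ] Lt a} (hw : w ∈ weyl a) (α x : Lt a) :
    w (reflect a α x) = reflect a (w α) (w x) := by
  rw [reflect, reflect, map_sub, map_smul, Iform_weyl_apply hw]

theorem gen_mem_realRoots (v : Vt a) : gen a v ∈ realRoots a :=
  ⟨1, one_mem _, v, rfl⟩

theorem weyl_apply_mem_realRoots {w : Lt a ≃ₗ[ℤ] Lt a} (hw : w ∈ weyl a) {x : Lt a}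
    (hx : x ∈ realRoots a) : w x ∈ realRoots a := by
  obtain ⟨w', hw', v, rfl⟩ := hx
  exact ⟨w * w', mul_mem hw hw', v, rfl⟩

theorem reflect_mem_realRoots {α x : Lt a} (hα : α ∈ realRoots a) (hx : x ∈ realRoots a) :
    reflect a α x ∈ realRoots a := by
  obtain ⟨w, hw, v, rfl⟩ := hα
  have hconj : reflect a (w (gen a v)) x = (w * simpleReflection v * w⁻¹) x := by
    rw [LinearEquiv.mul_apply, LinearEquiv.mul_apply, LinearEquiv.coe_inv, simpleReflection_apply,
      weyl_apply_reflect hw, LinearEquiv.apply_symm_apply]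
  rw [hconj]
  exact weyl_apply_mem_realRoots
    (mul_mem (mul_mem hw (simpleReflection_mem_weyl v)) (inv_mem hw)) hx

def transvection (γ x : Lt a) : Lt a := x + Iform a γ x • delta a

theorem transvection_add (γ γ' : Lt a) :
    transvection (γ + γ') = transvection γ ∘ transvection γ' := by
  funext x
  simp only [transvection, Function.comp_apply, Iform_add_left, Iform_add_right,
    Iform_smul_right, Iform_delta_right]
  module

theorem transvection_zero : transvection (0 : Lt a) = id := by
  funext x
  simp [transvection, ← Iformₗ_apply]

theorem weyl_apply_transvection {w : Lt a ≃ₗ[ℤ] Lt a} (hw : w ∈ weyl a) (γ x : Lt a) :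
    w (transvection γ x) = transvection (w γ) (w x) := by
  rw [transvection, transvection, map_add, map_smul, weyl_apply_delta hw, Iform_weyl_apply hw]

variable (a) in
def transvectionLattice : AddSubgroup (Lt a) where
  carrier := {γ | ∃ g ∈ weyl a, ⇑g = transvection γ}
  zero_mem' := ⟨1, one_mem _, transvection_zero.symm⟩
  add_mem' := by
    rintro γ γ' ⟨g, hg, hgγ⟩ ⟨g', hg', hgγ'⟩
    exact ⟨g * g', mul_mem hg hg', by rw [transvection_add, ← hgγ, ← hgγ']; rfl⟩
  neg_mem' := by
    rintro γ ⟨g, hg, hγ⟩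
    refine ⟨g⁻¹, inv_mem hg, funext fun x => (LinearEquiv.symm_apply_eq g).2 ?_⟩
    rw [hγ, ← Function.comp_apply (f := transvection γ), ← transvection_add, add_neg_cancel,
      transvection_zero, id]

theorem transvection_mem_realRoots {γ x : Lt a} (hγ : γ ∈ transvectionLattice a)
    (hx : x ∈ realRoots a) : transvection γ x ∈ realRoots a := by
  obtain ⟨g, hg, hgγ⟩ := hγ
  exact hgγ ▸ weyl_apply_mem_realRoots hg hx

theorem weyl_apply_mem_transvectionLattice {w : Lt a ≃ₗ[ℤ] Lt a} (hw : w ∈ weyl a) {γ : Lt a}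
    (hγ : γ ∈ transvectionLattice a) : w γ ∈ transvectionLattice a := by
  obtain ⟨g, hg, hgγ⟩ := hγ
  refine ⟨w * g * w⁻¹, mul_mem (mul_mem hw hg) (inv_mem hw), funext fun x => ?_⟩
  rw [LinearEquiv.mul_apply, LinearEquiv.mul_apply, LinearEquiv.coe_inv, hgγ,
    weyl_apply_transvection hw, LinearEquiv.apply_symm_apply]

theorem gen_one_mem_transvectionLattice : gen a Vt.one ∈ transvectionLattice a := by
  refine ⟨simpleReflection Vt.star * simpleReflection Vt.one,
    mul_mem (simpleReflection_mem_weyl _) (simpleReflection_mem_weyl _), funext fun x => ?_⟩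
  have hstar : Iform a (gen a Vt.star) x = Iform a (gen a Vt.one) x := by
    simpa [delta, sub_eq_zero] using Iform_delta_left x
  simp only [LinearEquiv.mul_apply, simpleReflection_apply, reflect, transvection,
    Iform_sub_right, Iform_smul_right, Iform_gen_gen, hstar, delta]
  simp only [cartan]
  module

theorem gen_mem_transvectionLattice_of_Iform_eq_neg_one {γ : Lt a}
    (hγ : γ ∈ transvectionLattice a) {v : Vt a} (hv : Iform a γ (gen a v) = -1) :
    gen a v ∈ transvectionLattice a := by
  have hrefl : simpleReflection v γ = γ + gen a v := by
    rw [simpleReflection_apply, reflect, Iform_symm, hv]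
    module
  simpa [hrefl] using (transvectionLattice a).sub_mem
    (weyl_apply_mem_transvectionLattice (simpleReflection_mem_weyl v) hγ) hγ

theorem exists_mem_transvectionLattice_Iform_gen_br (i : Fin 3) (j : Fin (a i - 1)) :
    ∃ γ ∈ transvectionLattice a, Iform a γ (gen a (Vt.br i j)) = -1 := by
  obtain ⟨n, hn⟩ := j
  induction n with
  | zero =>
    exact ⟨gen a Vt.one, gen_one_mem_transvectionLattice, by simp [Iform_gen_gen, cartan]⟩
  | succ n ih =>
    obtain ⟨γ, hγ, hγn⟩ := ih (by omega)
    exact ⟨_, gen_mem_transvectionLattice_of_Iform_eq_neg_one hγ hγn,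
      by simp [Iform_gen_gen, cartan]⟩

theorem gen_one_add_smul_delta_mem_realRoots (n : ℤ) :
    gen a Vt.one + n • delta a ∈ realRoots a := by
  obtain ⟨m, rfl | rfl⟩ := Int.even_or_odd' n
  · convert transvection_mem_realRoots ((transvectionLattice a).zsmul_mem
      gen_one_mem_transvectionLattice m) (gen_mem_realRoots Vt.one) using 1
    simp only [transvection, Iform_smul_left, Iform_gen_self]
    module
  · convert transvection_mem_realRoots ((transvectionLattice a).zsmul_mem
      gen_one_mem_transvectionLattice m) (gen_mem_realRoots Vt.star) using 1
    simp only [transvection, Iform_smul_left, Iform_gen_gen, delta]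
    simp only [cartan]
    module

theorem gen_add_smul_delta_mem_realRoots (v : Vt a) (n : ℤ) :
    gen a v + n • delta a ∈ realRoots a := by
  cases v with
  | star =>
    convert gen_one_add_smul_delta_mem_realRoots (n + 1) using 1
    simp only [delta]
    module
  | one => exact gen_one_add_smul_delta_mem_realRoots n
  | br i j =>
    obtain ⟨γ, hγ, hγj⟩ := exists_mem_transvectionLattice_Iform_gen_br i j
    convert transvection_mem_realRoots ((transvectionLattice a).zsmul_mem hγ (-n))
      (gen_mem_realRoots (Vt.br i j)) using 1
    simp only [transvection, Iform_smul_left, hγj]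
    module

def shear (c : Lt a →ₗ[ℤ] ℤ) (x : Lt a) : Lt a := x - c x • delta a

theorem Iform_shear_shear (c : Lt a →ₗ[ℤ] ℤ) (x y : Lt a) :
    Iform a (shear c x) (shear c y) = Iform a x y := by
  simp [shear, Iform_delta_left, Iform_delta_right]

theorem shear_reflect (c : Lt a →ₗ[ℤ] ℤ) (α x : Lt a) :
    shear c (reflect a α x) = reflect a (shear c α) (shear c x) := by
  rw [reflect, reflect, Iform_shear_shear]
  simp only [shear, map_sub, map_smul, smul_eq_mul]
  module

theorem shear_gen_mem_realRoots (c : Lt a →ₗ[ℤ] ℤ) (v : Vt a) :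
    shear c (gen a v) ∈ realRoots a := by
  simpa [shear, sub_eq_add_neg, neg_smul] using gen_add_smul_delta_mem_realRoots v (-c (gen a v))

theorem shear_mem_realRoots (c : Lt a →ₗ[ℤ] ℤ) {x : Lt a} (hx : x ∈ realRoots a) :
    shear c x ∈ realRoots a := by
  obtain ⟨w, hw, v, rfl⟩ := hx
  induction hw using Subgroup.closure_induction_left with
  | one => exact shear_gen_mem_realRoots c v
  | mul_left s hs w _ ih =>
    obtain ⟨u, hu⟩ := hs
    rw [LinearEquiv.mul_apply, hu, shear_reflect]
    exact reflect_mem_realRoots (shear_gen_mem_realRoots c u) ih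
  | inv_mul_cancel s hs w _ ih =>
    obtain ⟨u, hu⟩ := inv_mem_weylGens hs
    rw [LinearEquiv.mul_apply, hu, shear_reflect]
    exact reflect_mem_realRoots (shear_gen_mem_realRoots c u) ih

theorem shear_shear_neg (c : Lt a →ₗ[ℤ] ℤ) (hc : c (delta a) = 0) (x : Lt a) :
    shear c (shear (-c) x) = x := by
  simp [shear, hc]

theorem shear_image_realRoots (c : Lt a →ₗ[ℤ] ℤ) (hc : c (delta a) = 0) :
    shear c '' realRoots a = realRoots a := by
  refine Set.Subset.antisymm ?_ fun x hx => ?_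
  · rintro _ ⟨x, hx, rfl⟩
    exact shear_mem_realRoots c hx
  · exact ⟨shear (-c) x, shear_mem_realRoots (-c) hx, shear_shear_neg c hc x⟩

end RootSystem

theorem twist_preserves_realRoots_general (a : Fin 3 → ℕ)
    (χ : Lt a →ₗ[ℤ] Lt a →ₗ[ℤ] ℤ) (hχ : IsEulerForm a χ) :
    twist a χ '' realRoots a = realRoots a := by
  have hδ : χ (delta a) (delta a) = 0 := by
    have := hχ.1 (delta a) (delta a)
    rw [Iform_delta_left] at this
    omega
  exact shear_image_realRoots (χ (delta a)) hδ

/-- **The twist preserves the set of real roots** (Lemma 3.4 (3) of the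
paper): `t_δ(Δ̃_re) = Δ̃_re`, where `Δ̃_re = {w(α_v) : w ∈ W̃_A, v ∈ Ṽ_A}`. -/
theorem twist_preserves_realRoots (a : Fin 3 → ℕ) (ha : ∀ i, 0 < a i)
    (hA : 1 < (a 0 : ℚ)⁻¹ + (a 1 : ℚ)⁻¹ + (a 2 : ℚ)⁻¹)
    (χ : Lt a →ₗ[ℤ] Lt a →ₗ[ℤ] ℤ) (hχ : IsEulerForm a χ) :
    twist a χ '' realRoots a = realRoots a :=
  twist_preserves_realRoots_general a χ hχ

end
end AffineGRS
end
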